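/- arXiv:2502.06680 — 2 statements merged into one kernel-verified Lean document; each statement's English description precedes it below -/
import Mathlib

section
/- Let W be the lazy random walk on a finite simple connected graph G = (V,E) with stationary distribution π. Fix k ∈ ℕ and s ∈ ℕ with s ≥ t_mix + 1, where t_mix is the uniform (ℓ∞, 1/4) mixing time. Let A_1,...,A_k ⊂ ℕ be finite intervals with min(A_1) ≥ s and min(A_{i+1}) − max(A_i) ≥ s for all i. Then for every nonnegative function F on the product path space and every starting vertex ρ: E_ρ[F(W(A_1),...,W(A_k))] ≤ 2^k · E[F(W_1(A_1),...,W_k(A_k))], where W_1,...,W_k are independent lazy random walks each started from π. The reverse inequality holds with factor 2^{-k}. -/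
/-!
Once `n ≥ tmix`, the `n`-step law of the lazy walk from any vertex lies between `π / 2` and
`2 π`: the bound holds at `tmix` because the walk mixes at all (Doeblin's argument, using
connectivity and laziness), and it persists because `P^(n+1) = P P^n` averages rows.
Cut the walk by the Markov property at the two ends of every window. Before window `i` the
walk spends a gap of at least `s` steps, so whatever happened earlier, its position at the
start of the window has a law within a factor `2` of `π`. Replacing these `k` laws by `π`
costs a factor `2` each, and what remains is `k` independent stationary segments, which by
stationarity is the law of `(W_1(A_1), …, W_k(A_k))`.
-/

open Finset

variable {V : Type*} [Fintype V] [DecidableEq V] [Nonempty V]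

/-- One-step transition kernel of the lazy random walk on `G`:
stay put with probability `1/2`, otherwise move to a uniformly chosen neighbour. -/
noncomputable def lazyStep (G : SimpleGraph V) [DecidableRel G.Adj] (x y : V) : ℝ :=
  if x = y then 1 / 2 else if G.Adj x y then 1 / (2 * (G.degree x : ℝ)) else 0

/-- `n`-step transition probabilities of the lazy random walk. -/
noncomputable def lazyProb (G : SimpleGraph V) [DecidableRel G.Adj] : ℕ → V → V → ℝ
  | 0, x, y => if x = y then 1 else 0
  | n + 1, x, y => ∑ z : V, lazyStep G x z * lazyProb G n z y

/-- The stationary (degree-biased) distribution `π(x) = deg(x)/(2#E)`. -/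
noncomputable def statDist (G : SimpleGraph V) [DecidableRel G.Adj] (x : V) : ℝ :=
  (G.degree x : ℝ) / (2 * (G.edgeFinset.card : ℝ))

/-- The uniform `(ℓ∞, 1/4)` mixing time. -/
noncomputable def tmix (G : SimpleGraph V) [DecidableRel G.Adj] : ℕ :=
  sInf {n : ℕ | ∀ x y : V, |lazyProb G n x y / statDist G y - 1| ≤ 1 / 4}

/-- Extension of a finite path to all of `ℕ` (constant after time `N`). -/
def extPath (N : ℕ) (γ : Fin (N + 1) → V) : ℕ → V :=
  fun n => γ ⟨min n N, Nat.lt_succ_of_le (min_le_right n N)⟩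

/-- Weight of a finite path under the lazy random walk kernel. -/
noncomputable def pathWeight (G : SimpleGraph V) [DecidableRel G.Adj]
    (N : ℕ) (γ : Fin (N + 1) → V) : ℝ :=
  ∏ i ∈ Finset.range N, lazyStep G (extPath N γ i) (extPath N γ (i + 1))

open Classical in
/-- Probability, for the lazy random walk started at `ρ`, of a path event
depending only on the first `N+1` coordinates. -/
noncomputable def walkProb (G : SimpleGraph V) [DecidableRel G.Adj]
    (ρ : V) (N : ℕ) (E : (ℕ → V) → Prop) : ℝ :=
  ∑ γ : Fin (N + 1) → V,
    if extPath N γ 0 = ρ ∧ E (extPath N γ) then pathWeight G N γ else 0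

open Classical in
/-- Expectation, for the lazy random walk started at `ρ`, of a path functional
depending only on the first `N+1` coordinates. -/
noncomputable def walkExp (G : SimpleGraph V) [DecidableRel G.Adj]
    (ρ : V) (N : ℕ) (f : (ℕ → V) → ℝ) : ℝ :=
  ∑ γ : Fin (N + 1) → V,
    if extPath N γ 0 = ρ then pathWeight G N γ * f (extPath N γ) else 0

open Classical in
/-- Probability of a path event for the lazy random walk started from `π`. -/
noncomputable def walkProbStat (G : SimpleGraph V) [DecidableRel G.Adj]
    (N : ℕ) (E : (ℕ → V) → Prop) : ℝ :=
  ∑ γ : Fin (N + 1) → V,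
    if E (extPath N γ) then statDist G (extPath N γ 0) * pathWeight G N γ else 0

/-- Expectation of a path functional for the lazy random walk started from `π`. -/
noncomputable def walkExpStat (G : SimpleGraph V) [DecidableRel G.Adj]
    (N : ℕ) (f : (ℕ → V) → ℝ) : ℝ :=
  ∑ γ : Fin (N + 1) → V,
    statDist G (extPath N γ 0) * pathWeight G N γ * f (extPath N γ)

open Classical in
/-- Probability of a joint event for two independent lazy random walks,
each started from the stationary distribution. -/
noncomputable def twoWalkProbStat (G : SimpleGraph V) [DecidableRel G.Adj]
    (N : ℕ) (E : (ℕ → V) → (ℕ → V) → Prop) : ℝ :=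
  ∑ γ₁ : Fin (N + 1) → V, ∑ γ₂ : Fin (N + 1) → V,
    if E (extPath N γ₁) (extPath N γ₂) then
      (statDist G (extPath N γ₁ 0) * pathWeight G N γ₁) *
      (statDist G (extPath N γ₂ 0) * pathWeight G N γ₂) else 0

open Classical in
/-- Probability of a joint event for two independent lazy random walks,
both started at the vertex `ρ`. -/
noncomputable def twoWalkProbFrom (G : SimpleGraph V) [DecidableRel G.Adj]
    (ρ : V) (N : ℕ) (E : (ℕ → V) → (ℕ → V) → Prop) : ℝ :=
  ∑ γ₁ : Fin (N + 1) → V, ∑ γ₂ : Fin (N + 1) → V,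
    if extPath N γ₁ 0 = ρ ∧ extPath N γ₂ 0 = ρ ∧ E (extPath N γ₁) (extPath N γ₂) then
      pathWeight G N γ₁ * pathWeight G N γ₂ else 0

/-- Range of a path over a finite set of times. -/
def walkRange (w : ℕ → V) (A : Finset ℕ) : Finset V := A.image w

/-- `q̄^G(s)`: averaged intersection probability of two independent lazy walks
started at the same (uniform) vertex. -/
noncomputable def qbar (G : SimpleGraph V) [DecidableRel G.Adj] (s : ℕ) : ℝ :=
  (1 / (Fintype.card V : ℝ)) * ∑ ρ : V,
    twoWalkProbFrom G ρ s (fun w₁ w₂ =>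
      (walkRange w₁ (Finset.Icc 0 s) ∩ walkRange w₂ (Finset.Icc 1 s)).Nonempty)

/-- `H^W_ρ(m) = Σ_{i=0}^m Σ_{j=0}^m P_ρ(W(i+j)=ρ)`. -/
noncomputable def HW (G : SimpleGraph V) [DecidableRel G.Adj] (ρ : V) (m : ℕ) : ℝ :=
  ∑ i ∈ Finset.range (m + 1), ∑ j ∈ Finset.range (m + 1), lazyProb G (i + j) ρ ρ

/-- Expectation of a functional of `k` independent lazy random walks,
each started from the stationary distribution. -/
noncomputable def indepWalksExp (G : SimpleGraph V) [DecidableRel G.Adj]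
    (k N : ℕ) (F : (Fin k → ℕ → V) → ℝ) : ℝ :=
  ∑ γ : Fin k → Fin (N + 1) → V,
    (∏ i : Fin k, statDist G (extPath N (γ i) 0) * pathWeight G N (γ i)) *
      F (fun i => extPath N (γ i))

section StationaryDistribution

omit [DecidableEq V] [Nonempty V]

variable {G : SimpleGraph V} [DecidableRel G.Adj]

theorem statDist_nonneg (x : V) : 0 ≤ statDist G x := by
  unfold statDist
  positivity

theorem card_edgeFinset_pos [Nonempty V] (hdeg : ∀ v, 0 < G.degree v) : 0 < #G.edgeFinset := by
  obtain ⟨v⟩ := ‹Nonempty V›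
  have hsum : 0 < ∑ v, G.degree v := sum_pos (fun v _ => hdeg v) ⟨v, mem_univ v⟩
  have := G.sum_degrees_eq_twice_card_edges
  omega

theorem statDist_pos (hdeg : ∀ v, 0 < G.degree v) (x : V) : 0 < statDist G x := by
  have : Nonempty V := ⟨x⟩
  have : (0 : ℝ) < G.degree x := by exact_mod_cast hdeg x
  have : (0 : ℝ) < #G.edgeFinset := by exact_mod_cast card_edgeFinset_pos hdeg
  unfold statDist
  positivity

theorem sum_statDist [Nonempty V] (hdeg : ∀ v, 0 < G.degree v) : ∑ x, statDist G x = 1 := by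
  have hE : (0 : ℝ) < #G.edgeFinset := by exact_mod_cast card_edgeFinset_pos hdeg
  have hsum : ∑ x, (G.degree x : ℝ) = 2 * #G.edgeFinset := by
    exact_mod_cast G.sum_degrees_eq_twice_card_edges
  simp only [statDist, ← sum_div, hsum]
  field_simp

end StationaryDistribution

section MarkovChain

omit [Nonempty V]

variable {G : SimpleGraph V} [DecidableRel G.Adj]

theorem lazyStep_nonneg (x y : V) : 0 ≤ lazyStep G x y := by
  unfold lazyStep; split_ifs <;> positivity

theorem lazyStep_pos_of_adj {x y : V} (h : G.Adj x y) : 0 < lazyStep G x y := by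
  have : (0 : ℝ) < G.degree x := by exact_mod_cast h.degree_pos_left
  simp only [lazyStep, if_neg h.ne, if_pos h]
  positivity

theorem sum_lazyStep (hdeg : ∀ v, 0 < G.degree v) (x : V) : ∑ y, lazyStep G x y = 1 := by
  have hx : (G.degree x : ℝ) ≠ 0 := by exact_mod_cast (hdeg x).ne'
  have hsplit : ∀ y, lazyStep G x y =
      (if x = y then 1 / 2 else 0) + (if G.Adj x y then 1 / (2 * (G.degree x : ℝ)) else 0) := by
    intro y
    by_cases h : x = y
    · subst h; simp [lazyStep]
    · simp [lazyStep, h]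
  simp only [hsplit, sum_add_distrib, sum_ite_eq, mem_univ, if_true, ← sum_filter, sum_const,
    ← SimpleGraph.neighborFinset_eq_filter, SimpleGraph.card_neighborFinset_eq_degree,
    nsmul_eq_mul]
  field_simp
  ring

theorem lazyProb_nonneg (n : ℕ) (x y : V) : 0 ≤ lazyProb G n x y := by
  induction n generalizing x with
  | zero => unfold lazyProb; split_ifs <;> norm_num
  | succ n ih => exact sum_nonneg fun z _ => mul_nonneg (lazyStep_nonneg x z) (ih z)

theorem lazyProb_eq_pow (n : ℕ) (x y : V) :
    lazyProb G n x y = (Matrix.of (lazyStep G) ^ n) x y := by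
  induction n generalizing x with
  | zero => simp [lazyProb, Matrix.one_apply]
  | succ n ih => simp only [lazyProb, pow_succ', Matrix.mul_apply, ih, Matrix.of_apply]

theorem lazyProb_add (m n : ℕ) (x y : V) :
    lazyProb G (m + n) x y = ∑ z, lazyProb G m x z * lazyProb G n z y := by
  simp only [lazyProb_eq_pow, pow_add, Matrix.mul_apply]

theorem sum_lazyProb (hdeg : ∀ v, 0 < G.degree v) (n : ℕ) (x : V) :
    ∑ y, lazyProb G n x y = 1 := by
  have hP : Matrix.of (lazyStep G) ∈ Matrix.rowStochastic ℝ V :=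
    Matrix.mem_rowStochastic_iff_sum.2 ⟨lazyStep_nonneg, sum_lazyStep hdeg⟩
  simp only [lazyProb_eq_pow]
  exact Matrix.sum_row_of_mem_rowStochastic (pow_mem hP n) x

theorem mul_lazyProb_le_lazyProb_succ (n : ℕ) (x z y : V) :
    lazyStep G x z * lazyProb G n z y ≤ lazyProb G (n + 1) x y :=
  single_le_sum (fun z _ => mul_nonneg (lazyStep_nonneg x z) (lazyProb_nonneg n z y)) (mem_univ z)

theorem lazyProb_pos_of_length_le {x y : V} (p : G.Walk x y) {n : ℕ} (hp : p.length ≤ n) :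
    0 < lazyProb G n x y := by
  induction n generalizing x with
  | zero =>
    obtain rfl := p.eq_of_length_eq_zero (by omega)
    simp [lazyProb]
  | succ n ih =>
    cases p with
    | nil =>
      refine lt_of_lt_of_le (mul_pos ?_ (ih .nil (Nat.zero_le n)))
        (mul_lazyProb_le_lazyProb_succ n _ _ _)
      simp [lazyStep]
    | cons h q =>
      exact lt_of_lt_of_le (mul_pos (lazyStep_pos_of_adj h) (ih q (by simp at hp; omega)))
        (mul_lazyProb_le_lazyProb_succ n _ _ _)

theorem statDist_mul_lazyStep_comm (x y : V) :
    statDist G x * lazyStep G x y = statDist G y * lazyStep G y x := by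
  by_cases hxy : x = y
  · rw [hxy]
  by_cases hadj : G.Adj x y
  · have hx : (G.degree x : ℝ) ≠ 0 := by exact_mod_cast hadj.degree_pos_left.ne'
    have hy : (G.degree y : ℝ) ≠ 0 := by exact_mod_cast hadj.degree_pos_right.ne'
    simp only [statDist, lazyStep, if_neg hxy, if_neg (Ne.symm hxy), if_pos hadj,
      if_pos hadj.symm]
    field_simp
  · have hadj' : ¬G.Adj y x := fun h => hadj h.symm
    simp [lazyStep, hxy, Ne.symm hxy, hadj, hadj']

theorem sum_statDist_mul_lazyProb (hdeg : ∀ v, 0 < G.degree v) (n : ℕ) (y : V) :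
    ∑ x, statDist G x * lazyProb G n x y = statDist G y := by
  induction n generalizing y with
  | zero => simp [lazyProb]
  | succ n ih =>
    have hstep : ∀ z, ∑ x, statDist G x * lazyStep G x z = statDist G z := fun z => by
      simp only [statDist_mul_lazyStep_comm _ z, ← mul_sum, sum_lazyStep hdeg, mul_one]
    simp only [lazyProb, mul_sum]
    rw [sum_comm]
    simp only [← mul_assoc, ← sum_mul, hstep, ih]

end MarkovChain

section Mixing

variable {G : SimpleGraph V} [DecidableRel G.Adj]

/-- Doeblin: the part `δ π` of `P^m(x, ·)` contributes nothing, since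
`∑ z, π z * (P^n z y / π y - 1) = 0`. -/
theorem abs_lazyProb_add_div_statDist_sub_one_le (hdeg : ∀ v, 0 < G.degree v) {m n : ℕ}
    {δ c : ℝ} (hminor : ∀ x z, δ * statDist G z ≤ lazyProb G m x z)
    (hn : ∀ z y, |lazyProb G n z y / statDist G y - 1| ≤ c) (x y : V) :
    |lazyProb G (m + n) x y / statDist G y - 1| ≤ (1 - δ) * c := by
  set r : V → ℝ := fun z => lazyProb G n z y / statDist G y - 1
  have hr : ∀ μ : V → ℝ,
      ∑ z, μ z * r z = (∑ z, μ z * lazyProb G n z y) / statDist G y - ∑ z, μ z := by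
    intro μ
    simp only [r, mul_sub, mul_one, sum_sub_distrib, sum_div, mul_div_assoc]
  have hexp : lazyProb G (m + n) x y / statDist G y - 1
      = ∑ z, (lazyProb G m x z - δ * statDist G z) * r z := by
    simp only [sub_mul, sum_sub_distrib, mul_assoc, ← mul_sum, hr, ← lazyProb_add,
      sum_statDist_mul_lazyProb hdeg, sum_lazyProb hdeg, sum_statDist hdeg,
      div_self (statDist_pos hdeg y).ne']
    ring
  rw [hexp]
  calc |∑ z, (lazyProb G m x z - δ * statDist G z) * r z|
      ≤ ∑ z, |(lazyProb G m x z - δ * statDist G z) * r z| := abs_sum_le_sum_abs _ _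
    _ ≤ ∑ z, (lazyProb G m x z - δ * statDist G z) * c := by
        gcongr with z
        rw [abs_mul, abs_of_nonneg (sub_nonneg.2 (hminor x z))]
        exact mul_le_mul_of_nonneg_left (hn z y) (sub_nonneg.2 (hminor x z))
    _ = (1 - δ) * c := by
        rw [← sum_mul, sum_sub_distrib, sum_lazyProb hdeg, ← mul_sum, sum_statDist hdeg,
          mul_one]

theorem exists_forall_abs_lazyProb_div_statDist_sub_one_le (hconn : G.Connected)
    (hdeg : ∀ v, 0 < G.degree v) {ε : ℝ} (hε : 0 < ε) :
    ∃ n, ∀ x y, |lazyProb G n x y / statDist G y - 1| ≤ ε := by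
  set m := Fintype.card V
  have hpos : ∀ x z, 0 < lazyProb G m x z / statDist G z := fun x z =>
    div_pos (lazyProb_pos_of_length_le _ (hconn x z).some.toPath.2.length_lt.le)
      (statDist_pos hdeg z)
  obtain ⟨q, hq⟩ := Finite.exists_min fun q : V × V => lazyProb G m q.1 q.2 / statDist G q.2
  set δ := min (lazyProb G m q.1 q.2 / statDist G q.2) 1
  have hminor : ∀ x z, δ * statDist G z ≤ lazyProb G m x z := fun x z =>
    (le_div_iff₀ (statDist_pos hdeg z)).1 ((min_le_left _ _).trans (hq (x, z)))
  obtain ⟨q₀, hq₀⟩ :=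
    Finite.exists_max fun q : V × V => |lazyProb G 0 q.1 q.2 / statDist G q.2 - 1|
  set C := |lazyProb G 0 q₀.1 q₀.2 / statDist G q₀.2 - 1|
  have hiter : ∀ j x y, |lazyProb G (m * j) x y / statDist G y - 1| ≤ (1 - δ) ^ j * C := by
    intro j
    induction j with
    | zero => exact fun x y => by simpa using hq₀ (x, y)
    | succ j ih =>
      intro x y
      rw [Nat.mul_succ, add_comm, pow_succ', mul_assoc]
      exact abs_lazyProb_add_div_statDist_sub_one_le hdeg hminor ih x y
  have hδ : 0 < δ := lt_min (hpos q.1 q.2) one_pos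
  have hδ1 : δ ≤ 1 := min_le_right _ _
  have hlim : Filter.Tendsto (fun j => (1 - δ) ^ j * C) Filter.atTop (nhds 0) := by
    simpa using (tendsto_pow_atTop_nhds_zero_of_lt_one (by linarith) (by linarith)).mul_const C
  obtain ⟨j, hj⟩ := (hlim.eventually (gt_mem_nhds hε)).exists
  exact ⟨m * j, fun x y => (hiter j x y).trans hj.le⟩

theorem abs_lazyProb_div_statDist_sub_one_le_of_tmix_le (hconn : G.Connected)
    (hdeg : ∀ v, 0 < G.degree v) {n : ℕ} (hn : tmix G ≤ n) (x y : V) :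
    |lazyProb G n x y / statDist G y - 1| ≤ 1 / 4 := by
  revert x y
  induction n, hn using Nat.le_induction with
  | base =>
    exact Nat.sInf_mem
      (exists_forall_abs_lazyProb_div_statDist_sub_one_le hconn hdeg (by norm_num))
  | succ n _ ih =>
    have hminor : ∀ x z, 0 * statDist G z ≤ lazyProb G 1 x z := fun x z => by
      simpa using lazyProb_nonneg 1 x z
    simpa [add_comm] using abs_lazyProb_add_div_statDist_sub_one_le hdeg hminor ih

theorem lazyProb_mem_Icc_of_tmix_le (hconn : G.Connected) (hdeg : ∀ v, 0 < G.degree v)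
    {n : ℕ} (hn : tmix G ≤ n) (x y : V) :
    lazyProb G n x y ∈ Set.Icc (1 / 2 * statDist G y) (2 * statDist G y) := by
  have hπ := statDist_pos hdeg y
  have h := abs_le.1 (abs_lazyProb_div_statDist_sub_one_le_of_tmix_le hconn hdeg hn x y)
  have hlo := (le_div_iff₀ hπ).1 (by linarith : 3 / 4 ≤ lazyProb G n x y / statDist G y)
  have hhi := (div_le_iff₀ hπ).1 (by linarith : lazyProb G n x y / statDist G y ≤ 5 / 4)
  constructor <;> linarith

end Mixing

section Paths

variable {α : Type*}

def pathCons (x : α) (w : ℕ → α) : ℕ → α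
  | 0 => x
  | n + 1 => w n

@[simp]
theorem pathCons_zero (x : α) (w : ℕ → α) : pathCons x w 0 = x := rfl

@[simp]
theorem pathCons_succ (x : α) (w : ℕ → α) (n : ℕ) : pathCons x w (n + 1) = w n := rfl

def splice (t : ℕ) (w₁ w₂ : ℕ → α) : ℕ → α :=
  fun n => if n ≤ t then w₁ n else w₂ (n - t)

/-- The path that waits at `w 0` until time `u` and then follows `w`. -/
def delay (u : ℕ) (w : ℕ → α) : ℕ → α := fun n => w (n - u)

theorem splice_of_le_left {t n : ℕ} (h : n ≤ t) (w₁ w₂ : ℕ → α) :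
    splice t w₁ w₂ n = w₁ n :=
  if_pos h

theorem splice_of_le_right {t n : ℕ} (h : t ≤ n) {w₁ w₂ : ℕ → α} (h0 : w₂ 0 = w₁ t) :
    splice t w₁ w₂ n = w₂ (n - t) := by
  unfold splice
  split_ifs with h'
  · rw [show n = t by omega, Nat.sub_self, h0]
  · rfl

theorem splice_succ_pathCons (t : ℕ) (x : α) (w₁ w₂ : ℕ → α) :
    splice (t + 1) (pathCons x w₁) w₂ = pathCons x (splice t w₁ w₂) := by
  funext n
  cases n with
  | zero => rfl
  | succ n => simp [splice, pathCons]

theorem delay_delay (m n : ℕ) (w : ℕ → α) : delay m (delay n w) = delay (m + n) w := by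
  funext t
  simp [delay, Nat.sub_sub]

theorem extPath_cons {N : ℕ} (y : α) (γ : Fin (N + 1) → α) :
    extPath (N + 1) (Fin.cons y γ) = pathCons y (extPath N γ) := by
  funext n
  cases n with
  | zero => rfl
  | succ n =>
    simp only [extPath, pathCons, Nat.succ_min_succ]
    exact Fin.cons_succ (α := fun _ => α) y γ ⟨min n N, _⟩

end Paths

section WalkExp

omit [Nonempty V]

variable {G : SimpleGraph V} [DecidableRel G.Adj]

theorem pathWeight_nonneg (N : ℕ) (γ : Fin (N + 1) → V) : 0 ≤ pathWeight G N γ :=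
  prod_nonneg fun _ _ => lazyStep_nonneg _ _

theorem pathWeight_cons (N : ℕ) (y : V) (γ : Fin (N + 1) → V) :
    pathWeight G (N + 1) (Fin.cons y γ) = lazyStep G y (extPath N γ 0) * pathWeight G N γ := by
  simp only [pathWeight, prod_range_succ', extPath_cons]
  rw [mul_comm]
  rfl

theorem sum_mul_walkExp (g : V → ℝ) (N : ℕ) (f : (ℕ → V) → ℝ) :
    ∑ x, g x * walkExp G x N f
      = ∑ γ : Fin (N + 1) → V,
          g (extPath N γ 0) * (pathWeight G N γ * f (extPath N γ)) := by
  simp only [walkExp, mul_sum, mul_ite, mul_zero]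
  rw [sum_comm]
  refine sum_congr rfl fun γ _ => ?_
  rw [sum_ite_eq]
  simp

theorem walkExpStat_eq_sum (N : ℕ) (f : (ℕ → V) → ℝ) :
    walkExpStat G N f = ∑ x, statDist G x * walkExp G x N f := by
  simp only [sum_mul_walkExp, walkExpStat, mul_assoc]

theorem walkExp_zero (x : V) (f : (ℕ → V) → ℝ) : walkExp G x 0 f = f fun _ => x := by
  rw [walkExp, ← (Equiv.funUnique (Fin 1) V).symm.sum_comp]
  simp only [pathWeight, range_zero, prod_empty, one_mul]
  exact (sum_ite_eq' univ x _).trans (if_pos (mem_univ x))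

theorem walkExp_succ (x : V) (N : ℕ) (f : (ℕ → V) → ℝ) :
    walkExp G x (N + 1) f = ∑ y, lazyStep G x y * walkExp G y N (fun w => f (pathCons x w)) := by
  rw [walkExp, ← (Fin.consEquiv fun _ => V).sum_comp, Fintype.sum_prod_type, sum_mul_walkExp]
  have hcons : ∀ (y : V) (γ : Fin (N + 1) → V),
      (Fin.consEquiv fun _ => V) (y, γ) = Fin.cons y γ := fun _ _ => rfl
  simp only [hcons, extPath_cons, pathWeight_cons, pathCons_zero]
  rw [sum_comm]
  refine sum_congr rfl fun γ _ => ?_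
  rw [sum_ite_eq']
  simp [mul_assoc]

theorem walkExp_nonneg (x : V) (N : ℕ) {f : (ℕ → V) → ℝ} (hf : ∀ w, 0 ≤ f w) :
    0 ≤ walkExp G x N f :=
  sum_nonneg fun γ _ => by
    split_ifs
    exacts [mul_nonneg (pathWeight_nonneg N γ) (hf _), le_rfl]

theorem walkExp_mono (x : V) (N : ℕ) {f g : (ℕ → V) → ℝ} (hfg : ∀ w, f w ≤ g w) :
    walkExp G x N f ≤ walkExp G x N g :=
  sum_le_sum fun γ _ => by
    split_ifs
    exacts [mul_le_mul_of_nonneg_left (hfg _) (pathWeight_nonneg N γ), le_rfl]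

theorem walkExp_const_mul (x : V) (N : ℕ) (c : ℝ) (f : (ℕ → V) → ℝ) :
    walkExp G x N (fun w => c * f w) = c * walkExp G x N f := by
  simp only [walkExp, mul_sum, mul_ite, mul_zero]
  exact sum_congr rfl fun γ _ => by ring_nf

theorem walkExp_congr (x : V) (N : ℕ) {f g : (ℕ → V) → ℝ}
    (hfg : ∀ w, w 0 = x → f w = g w) :
    walkExp G x N f = walkExp G x N g :=
  sum_congr rfl fun γ _ => by
    split_ifs with h
    exacts [by rw [hfg _ h], rfl]

theorem walkExp_add (x : V) (t u : ℕ) (f : (ℕ → V) → ℝ) :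
    walkExp G x (t + u) f
      = walkExp G x t fun w₁ => walkExp G (w₁ t) u fun w₂ => f (splice t w₁ w₂) := by
  induction t generalizing x f with
  | zero =>
    rw [Nat.zero_add, walkExp_zero]
    refine walkExp_congr x u fun w h0 => congrArg f (funext fun n => ?_)
    rw [splice_of_le_right (Nat.zero_le n) h0, Nat.sub_zero]
  | succ t ih =>
    rw [Nat.add_right_comm, walkExp_succ, walkExp_succ]
    simp only [ih, pathCons_succ, splice_succ_pathCons]

theorem walkExp_comp_eval (x : V) (t : ℕ) (h : V → ℝ) :
    walkExp G x t (fun w => h (w t)) = ∑ y, lazyProb G t x y * h y := by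
  induction t generalizing x with
  | zero =>
    rw [walkExp_zero]
    simp [lazyProb]
  | succ t ih =>
    simp only [walkExp_succ, pathCons_succ, ih, mul_sum, lazyProb, sum_mul]
    rw [sum_comm]
    exact sum_congr rfl fun y _ => sum_congr rfl fun z _ => by ring

theorem walkExp_const (hdeg : ∀ v, 0 < G.degree v) (x : V) (N : ℕ) (c : ℝ) :
    walkExp G x N (fun _ => c) = c := by
  rw [walkExp_comp_eval x N fun _ => c, ← sum_mul, sum_lazyProb hdeg, one_mul]

theorem walkExp_of_dependsOn_Iic (hdeg : ∀ v, 0 < G.degree v) (x : V) {n : ℕ} (u : ℕ)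
    {f : (ℕ → V) → ℝ} (hf : DependsOn f (Set.Iic n)) :
    walkExp G x (n + u) f = walkExp G x n f := by
  rw [walkExp_add]
  refine congrArg (walkExp G x n) (funext fun w₁ => ?_)
  rw [← walkExp_const hdeg (w₁ n) u (f w₁)]
  exact congrArg (walkExp G (w₁ n) u) (funext fun w₂ =>
    hf fun i hi => splice_of_le_left hi w₁ w₂)

theorem walkExp_of_dependsOn_Ici (x : V) (u m : ℕ) {f : (ℕ → V) → ℝ}
    (hf : DependsOn f (Set.Ici u)) :
    walkExp G x (u + m) f = ∑ y, lazyProb G u x y * walkExp G y m (fun w => f (delay u w)) := by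
  rw [walkExp_add, ← walkExp_comp_eval x u fun y => walkExp G y m fun w => f (delay u w)]
  refine congrArg (walkExp G x u) (funext fun w₁ => walkExp_congr _ m fun w₂ h0 => ?_)
  exact hf fun i hi => splice_of_le_right hi h0

theorem walkExpStat_of_dependsOn_Icc (hdeg : ∀ v, 0 < G.degree v) {u v N : ℕ} (huv : u ≤ v)
    (hvN : v ≤ N) {f : (ℕ → V) → ℝ} (hf : DependsOn f (Set.Icc u v)) :
    walkExpStat G N f = walkExpStat G (v - u) (fun w => f (delay u w)) := by
  have htail : ∀ x, walkExp G x N f = walkExp G x (u + (v - u)) f := fun x => by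
    rw [show N = u + (v - u) + (N - v) by omega,
      walkExp_of_dependsOn_Iic hdeg x _ (hf.mono fun n hn => show n ≤ u + (v - u) by
        have := hn.2; omega)]
  simp only [walkExpStat_eq_sum, htail, walkExp_of_dependsOn_Ici _ _ _
    (hf.mono Set.Icc_subset_Ici_self), mul_sum]
  rw [sum_comm]
  simp only [← mul_assoc, ← sum_mul, sum_statDist_mul_lazyProb hdeg]

end WalkExp

section Windows

variable {α β : Type*} {k : ℕ}

def DependsOnWindows (F : (Fin k → ℕ → α) → β) (a b : Fin k → ℕ) : Prop :=
  ∀ g g' : Fin k → ℕ → α,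
    (∀ i, ∀ n ∈ Finset.Icc (a i) (b i), g i n = g' i n) → F g = F g'

structure SeparatedWindows (s : ℕ) (a b : Fin k → ℕ) : Prop where
  left_le_right : ∀ i, a i ≤ b i
  le_first : ∀ i : Fin k, (i : ℕ) = 0 → s ≤ a i
  add_le_next : ∀ i j : Fin k, (j : ℕ) = i + 1 → b i + s ≤ a j

namespace SeparatedWindows

variable {s : ℕ} {a b : Fin (k + 1) → ℕ}

theorem monotone_right (h : SeparatedWindows s a b) : Monotone b :=
  Fin.monotone_iff_le_succ.2 fun i =>
    (Nat.le_add_right _ s).trans ((h.add_le_next _ _ (by simp)).trans (h.left_le_right i.succ))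

theorem add_le_succ (h : SeparatedWindows s a b) (j : Fin k) : b 0 + s ≤ a j.succ :=
  (Nat.add_le_add_right (h.monotone_right (Fin.zero_le _)) s).trans
    (h.add_le_next j.castSucc j.succ (by simp))

theorem tail (h : SeparatedWindows s a b) :
    SeparatedWindows s (fun i => a i.succ - b 0) (fun i => b i.succ - b 0) where
  left_le_right i := Nat.sub_le_sub_right (h.left_le_right i.succ) _
  le_first i _ := by have := h.add_le_succ i; omega
  add_le_next i j hij := by
    have := h.add_le_next i.succ j.succ (by simp [hij])
    have := h.add_le_succ i
    have := h.left_le_right i.succ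
    omega

end SeparatedWindows

namespace DependsOnWindows

variable {F : (Fin (k + 1) → ℕ → α) → β} {a b : Fin (k + 1) → ℕ}

theorem comp_cons (hF : DependsOnWindows F a b) (w : ℕ → α) :
    DependsOnWindows (fun h => F (Fin.cons w h)) (fun i => a i.succ) (fun i => b i.succ) :=
  fun g g' hg => hF _ _ fun i n hn => by
    cases i using Fin.cases with
    | zero => rfl
    | succ j => exact hg j n hn

theorem dependsOn_cons (hF : DependsOnWindows F a b) (h : Fin k → ℕ → α) :
    DependsOn (fun w => F (Fin.cons w h)) (Set.Icc (a 0) (b 0)) :=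
  fun _ _ hw => hF _ _ fun i n hn => by
    cases i using Fin.cases with
    | zero => exact hw n (by simpa using hn)
    | succ j => rfl

theorem dependsOn_diag (hF : DependsOnWindows F a b) {u : ℕ} (hu : ∀ i, u ≤ a i) :
    DependsOn (fun w => F fun _ => w) (Set.Ici u) :=
  fun _ _ hw => hF _ _ fun i n hn => hw n ((hu i).trans (mem_Icc.1 hn).1)

end DependsOnWindows

theorem DependsOnWindows.comp_delay {F : (Fin k → ℕ → α) → β} {a b : Fin k → ℕ}
    (hF : DependsOnWindows F a b) {c : ℕ} (hc : ∀ i, c ≤ a i) :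
    DependsOnWindows (fun h => F fun i => delay c (h i)) (fun i => a i - c) (fun i => b i - c) :=
  fun g g' hg => hF _ _ fun i n hn => by
    have := hc i
    rw [mem_Icc] at hn
    exact hg i (n - c)
      (mem_Icc.2 ⟨show a i - c ≤ n - c by omega, show n - c ≤ b i - c by omega⟩)

theorem delay_cons (a : Fin (k + 1) → ℕ) (w : ℕ → α) (h : Fin k → ℕ → α) :
    (fun i => delay (a i) ((Fin.cons w h : Fin (k + 1) → ℕ → α) i))
      = Fin.cons (delay (a 0) w) fun i => delay (a i.succ) (h i) := by
  funext i
  cases i using Fin.cases <;> rfl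

end Windows

section Segments

omit [Nonempty V]

variable {G : SimpleGraph V} [DecidableRel G.Adj]

variable (G) in
/-- Expectation of `F` over `k` independent lazy walks started from `π`, the `i`-th one run
for `ℓ i` steps. -/
noncomputable def segmentsExp :
    (k : ℕ) → (Fin k → ℕ) → ((Fin k → ℕ → V) → ℝ) → ℝ
  | 0, _, F => F Fin.elim0
  | k + 1, ℓ, F => walkExpStat G (ℓ 0) fun w =>
      segmentsExp k (fun i => ℓ i.succ) fun h => F (Fin.cons w h)

theorem indepWalksExp_succ (k N : ℕ) (F : (Fin (k + 1) → ℕ → V) → ℝ) :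
    indepWalksExp G (k + 1) N F
      = walkExpStat G N fun w => indepWalksExp G k N fun h => F (Fin.cons w h) := by
  simp only [indepWalksExp, walkExpStat, mul_sum]
  rw [← (Fin.consEquiv fun _ => Fin (N + 1) → V).sum_comp, Fintype.sum_prod_type]
  refine sum_congr rfl fun γ₀ _ => sum_congr rfl fun γ _ => ?_
  have hcomp : (fun i => extPath N ((Fin.consEquiv fun _ => Fin (N + 1) → V) (γ₀, γ) i))
      = Fin.cons (extPath N γ₀) fun i => extPath N (γ i) :=
    Fin.comp_cons (extPath N) γ₀ γ
  rw [hcomp, Fin.prod_univ_succ]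
  simp only [Fin.consEquiv, Equiv.coe_fn_mk, Fin.cons_zero, Fin.cons_succ]
  ring

theorem indepWalksExp_eq_segmentsExp (hdeg : ∀ v, 0 < G.degree v) {k N : ℕ}
    {a b : Fin k → ℕ} (hab : ∀ i, a i ≤ b i) (hN : ∀ i, b i ≤ N)
    {F : (Fin k → ℕ → V) → ℝ} (hF : DependsOnWindows F a b) :
    indepWalksExp G k N F
      = segmentsExp G k (fun i => b i - a i) fun h => F fun i => delay (a i) (h i) := by
  induction k with
  | zero =>
    simp only [indepWalksExp, segmentsExp, Finset.univ_unique, sum_singleton, univ_eq_empty,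
      prod_empty, one_mul]
    exact congrArg F (Subsingleton.elim _ _)
  | succ k ih =>
    have hdep : DependsOn (fun w => indepWalksExp G k N fun h => F (Fin.cons w h))
        (Set.Icc (a 0) (b 0)) := fun w w' hw =>
      sum_congr rfl fun γ _ => congrArg _ (hF.dependsOn_cons _ hw)
    rw [indepWalksExp_succ, walkExpStat_of_dependsOn_Icc hdeg (hab 0) (hN 0) hdep, segmentsExp]
    simp only [delay_cons]
    exact congrArg _ (funext fun w =>
      ih (fun i => hab i.succ) (fun i => hN i.succ) (hF.comp_cons _))

end Segments

section Comparison

omit [Nonempty V]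

variable {G : SimpleGraph V} [DecidableRel G.Adj]

theorem sum_mul_mem_Icc_pow_succ {ι : Type*} [Fintype ι] {c C : ℝ} (hc : 0 ≤ c) (k : ℕ)
    {p q e f : ι → ℝ} (hq : ∀ i, 0 ≤ q i) (hp : ∀ i, p i ∈ Set.Icc (c * q i) (C * q i))
    (he0 : ∀ i, 0 ≤ e i) (he : ∀ i, e i ∈ Set.Icc (c ^ k * f i) (C ^ k * f i)) :
    ∑ i, p i * e i ∈
      Set.Icc (c ^ (k + 1) * ∑ i, q i * f i) (C ^ (k + 1) * ∑ i, q i * f i) := by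
  rw [mul_sum, mul_sum]
  constructor <;> refine sum_le_sum fun i _ => ?_
  · calc c ^ (k + 1) * (q i * f i) = c * q i * (c ^ k * f i) := by ring
      _ ≤ c * q i * e i := mul_le_mul_of_nonneg_left (he i).1 (mul_nonneg hc (hq i))
      _ ≤ p i * e i := mul_le_mul_of_nonneg_right (hp i).1 (he0 i)
  · calc p i * e i ≤ C * q i * e i := mul_le_mul_of_nonneg_right (hp i).2 (he0 i)
      _ ≤ C * q i * (C ^ k * f i) :=
        mul_le_mul_of_nonneg_left (he i).2 ((mul_nonneg hc (hq i)).trans ((hp i).1.trans (hp i).2))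
      _ = C ^ (k + 1) * (q i * f i) := by ring

/-- The Markov property at the two ends `a 0` and `b 0` of the first window. -/
theorem walkExp_diag_eq {k N : ℕ} {a b : Fin (k + 1) → ℕ} (hab : a 0 ≤ b 0)
    (hbN : b 0 ≤ N) (hnext : ∀ j : Fin k, b 0 ≤ a j.succ)
    {F : (Fin (k + 1) → ℕ → V) → ℝ} (hF : DependsOnWindows F a b) (x : V) :
    walkExp G x N (fun w => F fun _ => w)
      = ∑ y, lazyProb G (a 0) x y * walkExp G y (b 0 - a 0) fun w₁ =>
          walkExp G (w₁ (b 0 - a 0)) (N - b 0) fun w₂ =>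
            F (Fin.cons (delay (a 0) w₁) fun _ => delay (b 0) w₂) := by
  have ha : ∀ i, a 0 ≤ a i := Fin.cases le_rfl fun j => hab.trans (hnext j)
  conv_lhs => rw [show N = a 0 + ((b 0 - a 0) + (N - b 0)) by omega]
  rw [walkExp_of_dependsOn_Ici _ _ _ (hF.dependsOn_diag ha)]
  refine sum_congr rfl fun y _ => congrArg _ ?_
  rw [walkExp_add]
  refine congrArg _ (funext fun w₁ => walkExp_congr _ _ fun w₂ h0 => hF _ _ fun i n hn => ?_)
  rw [mem_Icc] at hn
  cases i using Fin.cases with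
  | zero => exact splice_of_le_left (by omega) w₁ w₂
  | succ j =>
    have := hnext j
    simp only [delay, Fin.cons_succ]
    rw [splice_of_le_right (by omega) h0]
    congr 1
    omega

theorem walkExp_diag_mem_Icc (hdeg : ∀ v, 0 < G.degree v) {c C : ℝ} (hc : 0 ≤ c) {s : ℕ}
    (hmix : ∀ n, s ≤ n → ∀ x y,
      lazyProb G n x y ∈ Set.Icc (c * statDist G y) (C * statDist G y))
    {k N : ℕ} {a b : Fin k → ℕ} (hsep : SeparatedWindows s a b) (hN : ∀ i, b i ≤ N)
    {F : (Fin k → ℕ → V) → ℝ} (hF0 : ∀ g, 0 ≤ F g) (hF : DependsOnWindows F a b)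
    (x : V) :
    walkExp G x N (fun w => F fun _ => w) ∈
      Set.Icc (c ^ k * segmentsExp G k (fun i => b i - a i) fun h => F fun i => delay (a i) (h i))
        (C ^ k * segmentsExp G k (fun i => b i - a i) fun h => F fun i => delay (a i) (h i)) := by
  induction k generalizing N x with
  | zero =>
    have hconst : (fun w => F fun _ => w) = fun _ => F Fin.elim0 :=
      funext fun _ => congrArg F (Subsingleton.elim _ _)
    have h : walkExp G x N (fun w => F fun _ => w) = F fun i => delay (a i) (Fin.elim0 i) := by
      rw [hconst, walkExp_const hdeg]
      exact congrArg F (Subsingleton.elim _ _)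
    simp [segmentsExp, h]
  | succ k ih =>
    have hnext : ∀ j : Fin k, b 0 ≤ a j.succ :=
      fun j => (Nat.le_add_right _ _).trans (hsep.add_le_succ j)
    set K : (ℕ → V) → ℝ := fun w₁ => segmentsExp G k (fun i => b i.succ - a i.succ) fun h =>
      F (Fin.cons (delay (a 0) w₁) fun i => delay (a i.succ) (h i))
    have hK : ∀ w₁, walkExp G (w₁ (b 0 - a 0)) (N - b 0) (fun w₂ =>
        F (Fin.cons (delay (a 0) w₁) fun _ => delay (b 0) w₂))
          ∈ Set.Icc (c ^ k * K w₁) (C ^ k * K w₁) := fun w₁ => by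
      have hstart : ∀ i : Fin k, b 0 + (a i.succ - b 0) = a i.succ := fun i => by
        have := hnext i; omega
      have hlen : ∀ i : Fin k, b i.succ - b 0 - (a i.succ - b 0) = b i.succ - a i.succ :=
        fun i => by have := hnext i; omega
      have := ih hsep.tail (fun i => Nat.sub_le_sub_right (hN i.succ) _) (fun _ => hF0 _)
        ((hF.comp_cons (delay (a 0) w₁)).comp_delay hnext) (w₁ (b 0 - a 0))
      simpa only [delay_delay, hstart, hlen] using this
    rw [walkExp_diag_eq (hsep.left_le_right 0) (hN 0) hnext hF, segmentsExp, walkExpStat_eq_sum]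
    simp only [delay_cons]
    refine sum_mul_mem_Icc_pow_succ hc k statDist_nonneg (hmix _ (hsep.le_first 0 rfl) x)
      (fun y => walkExp_nonneg _ _ fun _ => walkExp_nonneg _ _ fun _ => hF0 _) fun y => ?_
    rw [← walkExp_const_mul, ← walkExp_const_mul]
    exact ⟨walkExp_mono _ _ fun w₁ => (hK w₁).1, walkExp_mono _ _ fun w₁ => (hK w₁).2⟩

end Comparison

/-- Nearly independent after mixing. -/
theorem nearly_independent_after_mixing
    (G : SimpleGraph V) [DecidableRel G.Adj] (hconn : G.Connected)
    (hcard : 2 ≤ Fintype.card V)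
    (k s N : ℕ) (hs : tmix G + 1 ≤ s)
    (a b : Fin k → ℕ) (hab : ∀ i, a i ≤ b i)
    (ha0 : ∀ i : Fin k, (i : ℕ) = 0 → s ≤ a i)
    (hsep : ∀ i j : Fin k, (j : ℕ) = (i : ℕ) + 1 → b i + s ≤ a j)
    (hN : ∀ i, b i ≤ N)
    (F : (Fin k → ℕ → V) → ℝ) (hF0 : ∀ g, 0 ≤ F g)
    (hFdep : ∀ g g' : Fin k → ℕ → V,
      (∀ i : Fin k, ∀ n ∈ Finset.Icc (a i) (b i), g i n = g' i n) → F g = F g')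
    (ρ : V) :
    walkExp G ρ N (fun w => F (fun _ => w)) ≤ 2 ^ k * indepWalksExp G k N F ∧
    ((1 : ℝ) / 2) ^ k * indepWalksExp G k N F ≤ walkExp G ρ N (fun w => F (fun _ => w)) := by
  have : Nontrivial V := Fintype.one_lt_card_iff_nontrivial.1 hcard
  have hdeg : ∀ v, 0 < G.degree v := fun v => hconn.preconnected.degree_pos_of_nontrivial v
  have hmix : ∀ n, s ≤ n → ∀ x y,
      lazyProb G n x y ∈ Set.Icc (1 / 2 * statDist G y) (2 * statDist G y) :=
    fun n hn => lazyProb_mem_Icc_of_tmix_le hconn hdeg (by omega)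
  have h := walkExp_diag_mem_Icc hdeg (by norm_num) hmix ⟨hab, ha0, hsep⟩ hN hF0 hFdep ρ
  rw [← indepWalksExp_eq_segmentsExp hdeg hab hN hFdep] at h
  exact ⟨h.2, h.1⟩
end

section
/- Let W be the lazy random walk on a finite simple connected regular graph G = (V,E). Fix s', r ∈ ℕ with r ≥ s' + 1 and s' ≥ t_mix + 1. Then for all N ∈ ℕ_0 and every starting vertex ρ: P_ρ(for all n ∈ [0,N], W(n) ∉ {W(m) : m ∈ [n+s', n+r]}) ≥ 1 − 2(r−s'+1)(N+1)/#V. In words: with high probability the walk closes no loop whose length lies in the intermediate window [s', r]. -/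
open Finset

variable {V : Type*} [Fintype V] [DecidableEq V] [Nonempty V]

/-!
A loop of length `k` at time `n` is the event `W n = W (n + k)`. By the Markov property its
probability is `∑ y, P^n(ρ, y) P^k(y, y)`, and on a regular graph the stationary distribution is
uniform, so for `k ≥ t_mix` the return probability `P^k(y, y)` is at most `(5/4)/#V ≤ 2/#V`.
A union bound over the `(N + 1)(r - s' + 1)` pairs `(n, k)` finishes the proof.

Since `tmix` is an `sInf` (which is `0` on the empty set), its defining bound must be earned by
showing that the walk mixes at all. This is Doeblin's argument: on a connected graph every entry
of `P^{#V}` is at least some `ε > 0`, and such a kernel contracts the sup-distance to the uniform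
distribution by the factor `1 - ε #V`.
-/

set_option linter.unusedSectionVars false

def consSeq (x : V) (w : ℕ → V) : ℕ → V
  | 0 => x
  | i + 1 => w i

lemma extPath_zero (M : ℕ) (γ : Fin (M + 1) → V) : extPath M γ 0 = γ 0 := by
  simp [extPath]

lemma extPath_cons_s5 (M : ℕ) (x : V) (γ : Fin (M + 1) → V) :
    extPath (M + 1) (Fin.cons x γ) = consSeq x (extPath M γ) := by
  funext i
  cases i with
  | zero => simp [extPath, consSeq]
  | succ i =>
    simp only [extPath, consSeq, Nat.add_min_add_right]
    exact Fin.cons_succ (α := fun _ => V) x γ ⟨min i M, _⟩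

namespace SimpleGraph

variable (G : SimpleGraph V) [DecidableRel G.Adj] {d : ℕ}

lemma lazyStep_nonneg (x y : V) : 0 ≤ lazyStep G x y := by
  unfold lazyStep
  split_ifs <;> positivity

lemma sum_lazyStep (hdeg : ∀ x, 0 < G.degree x) (x : V) : ∑ y, lazyStep G x y = 1 := by
  have hsplit : ∀ y, lazyStep G x y =
      (if x = y then 1 / 2 else 0) +
        if y ∈ G.neighborFinset x then (2 * (G.degree x : ℝ))⁻¹ else 0 := by
    intro y
    by_cases hxy : x = y <;> simp [lazyStep, hxy]
  have hd : (G.degree x : ℝ) ≠ 0 := by exact_mod_cast (hdeg x).ne'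
  simp only [hsplit, sum_add_distrib, sum_ite_eq, sum_ite_mem, univ_inter, sum_const,
    card_neighborFinset_eq_degree, mem_univ, if_true, nsmul_eq_mul]
  field_simp
  norm_num

lemma lazyStep_comm (hreg : G.IsRegularOfDegree d) (x y : V) :
    lazyStep G x y = lazyStep G y x := by
  simp only [lazyStep, eq_comm (a := x), G.adj_comm x y, hreg x, hreg y]

lemma lazyProb_zero (x y : V) : lazyProb G 0 x y = if x = y then 1 else 0 := rfl

lemma lazyProb_succ (n : ℕ) (x y : V) :
    lazyProb G (n + 1) x y = ∑ z, lazyStep G x z * lazyProb G n z y := rfl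

lemma lazyProb_nonneg (n : ℕ) (x y : V) : 0 ≤ lazyProb G n x y := by
  induction n generalizing x with
  | zero => rw [lazyProb_zero]; split_ifs <;> norm_num
  | succ n ih => exact sum_nonneg fun z _ => mul_nonneg (G.lazyStep_nonneg x z) (ih z)

lemma sum_lazyProb (hdeg : ∀ x, 0 < G.degree x) (n : ℕ) (x : V) : ∑ y, lazyProb G n x y = 1 := by
  induction n generalizing x with
  | zero => simp [lazyProb_zero]
  | succ n ih =>
    simp_rw [lazyProb_succ, ← sum_lazyStep G hdeg x]
    rw [sum_comm]
    simp [← mul_sum, ih]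

lemma lazyProb_add (m n : ℕ) (x y : V) :
    lazyProb G (m + n) x y = ∑ z, lazyProb G m x z * lazyProb G n z y := by
  induction m generalizing x with
  | zero => simp [lazyProb_zero]
  | succ m ih =>
    rw [Nat.add_right_comm, lazyProb_succ]
    simp_rw [ih, lazyProb_succ, mul_sum, sum_mul, mul_assoc]
    exact sum_comm

lemma lazyProb_one (x y : V) : lazyProb G 1 x y = lazyStep G x y := by
  simp [lazyProb_succ, lazyProb_zero]

lemma lazyProb_comm (hreg : G.IsRegularOfDegree d) (n : ℕ) (x y : V) :
    lazyProb G n x y = lazyProb G n y x := by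
  induction n generalizing x y with
  | zero => simp [lazyProb_zero, eq_comm]
  | succ n ih =>
    rw [lazyProb_succ, lazyProb_add, sum_congr rfl fun z _ => ?_]
    rw [ih, lazyProb_one, lazyStep_comm G hreg, mul_comm]

lemma sum_lazyProb_left (hdeg : ∀ x, 0 < G.degree x) (hreg : G.IsRegularOfDegree d)
    (n : ℕ) (y : V) : ∑ x, lazyProb G n x y = 1 := by
  simp_rw [lazyProb_comm G hreg n _ y, sum_lazyProb G hdeg]

lemma half_mul_lazyProb_le_succ (n : ℕ) (x y : V) :
    1 / 2 * lazyProb G n x y ≤ lazyProb G (n + 1) x y := by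
  have hself := single_le_sum (fun z _ => mul_nonneg (G.lazyStep_nonneg x z)
    (G.lazyProb_nonneg n z y)) (mem_univ x)
  rwa [lazyStep, if_pos rfl] at hself

lemma lazyProb_pos_of_le {m n : ℕ} (hmn : m ≤ n) {x y : V} (h : 0 < lazyProb G m x y) :
    0 < lazyProb G n x y := by
  induction n, hmn using Nat.le_induction with
  | base => exact h
  | succ n _ ih => linarith [G.half_mul_lazyProb_le_succ n x y]

lemma lazyProb_length_pos {x y : V} (p : G.Walk x y) : 0 < lazyProb G p.length x y := by
  induction p with
  | nil => simp [lazyProb_zero]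
  | @cons a b c hab p ih =>
    have hstep : 0 < lazyStep G a b := by
      have := hab.degree_pos_left
      simp only [lazyStep, hab.ne, hab, if_false, if_true]
      positivity
    rw [Walk.length_cons, lazyProb_succ]
    exact lt_of_lt_of_le (mul_pos hstep ih) (single_le_sum (fun z _ => mul_nonneg
      (G.lazyStep_nonneg a z) (G.lazyProb_nonneg _ z c)) (mem_univ b))

lemma lazyProb_card_pos (hconn : G.Connected) (x y : V) : 0 < lazyProb G (Fintype.card V) x y :=
  let p := (hconn x y).some.toPath
  G.lazyProb_pos_of_le p.2.length_lt.le (G.lazyProb_length_pos p.1)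

lemma abs_sum_mul_sub_inv_card_le {P Q : V → V → ℝ} {ε a : ℝ} {x y : V}
    (hP : ∀ z, ε ≤ P x z) (hProw : ∑ z, P x z = 1) (hQcol : ∑ z, Q z y = 1)
    (hQ : ∀ z, |Q z y - (Fintype.card V : ℝ)⁻¹| ≤ a) :
    |∑ z, P x z * Q z y - (Fintype.card V : ℝ)⁻¹| ≤ (1 - ε * Fintype.card V) * a := by
  have hcard : (Fintype.card V : ℝ) ≠ 0 := Nat.cast_ne_zero.mpr Fintype.card_ne_zero
  have hcentred : ∑ z, P x z * Q z y - (Fintype.card V : ℝ)⁻¹ =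
      ∑ z, (P x z - ε) * (Q z y - (Fintype.card V : ℝ)⁻¹) := by
    simp only [sub_mul, mul_sub, sum_sub_distrib, ← mul_sum, ← sum_mul, hProw, hQcol,
      sum_const, card_univ, nsmul_eq_mul]
    field_simp
    ring
  calc |∑ z, P x z * Q z y - (Fintype.card V : ℝ)⁻¹|
      ≤ ∑ z, (P x z - ε) * a := by
        rw [hcentred]
        refine (abs_sum_le_sum_abs _ _).trans (sum_le_sum fun z _ => ?_)
        rw [abs_mul, abs_of_nonneg (sub_nonneg.mpr (hP z))]
        exact mul_le_mul_of_nonneg_left (hQ z) (sub_nonneg.mpr (hP z))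
    _ = (1 - ε * Fintype.card V) * a := by
        rw [← sum_mul, sum_sub_distrib, hProw, sum_const, card_univ, nsmul_eq_mul, mul_comm ε]

lemma abs_lazyProb_mul_sub_inv_card_le (hdeg : ∀ x, 0 < G.degree x)
    (hreg : G.IsRegularOfDegree d) {ε : ℝ} {n₀ : ℕ} (hmin : ∀ x y, ε ≤ lazyProb G n₀ x y)
    (j : ℕ) (x y : V) :
    |lazyProb G (j * n₀) x y - (Fintype.card V : ℝ)⁻¹| ≤ (1 - ε * Fintype.card V) ^ j := by
  induction j generalizing x with
  | zero =>
    have hinv_pos : (0 : ℝ) < (Fintype.card V : ℝ)⁻¹ := by positivity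
    have hinv_le : (Fintype.card V : ℝ)⁻¹ ≤ 1 :=
      inv_le_one_of_one_le₀ (Nat.one_le_cast.mpr Fintype.card_pos)
    rw [zero_mul, lazyProb_zero, pow_zero, abs_le]
    split_ifs <;> constructor <;> linarith
  | succ j ih =>
    rw [Nat.succ_mul, add_comm, lazyProb_add, pow_succ']
    exact abs_sum_mul_sub_inv_card_le (hmin x) (G.sum_lazyProb hdeg n₀ x)
      (G.sum_lazyProb_left hdeg hreg _ y) (fun z => ih z)

lemma exists_forall_abs_lazyProb_sub_inv_card_le (hconn : G.Connected)
    (hdeg : ∀ x, 0 < G.degree x) (hreg : G.IsRegularOfDegree d) {δ : ℝ} (hδ : 0 < δ) :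
    ∃ n, ∀ x y, |lazyProb G n x y - (Fintype.card V : ℝ)⁻¹| ≤ δ := by
  obtain ⟨⟨x₀, y₀⟩, -, hmin⟩ := exists_min_image univ
    (fun p : V × V => lazyProb G (Fintype.card V) p.1 p.2) univ_nonempty
  have hε : 0 < lazyProb G (Fintype.card V) x₀ y₀ := G.lazyProb_card_pos hconn x₀ y₀
  obtain ⟨j, hj⟩ := exists_pow_lt_of_lt_one hδ
    (show 1 - lazyProb G (Fintype.card V) x₀ y₀ * Fintype.card V < 1 by
      have : (0 : ℝ) < Fintype.card V := by exact_mod_cast Fintype.card_pos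
      nlinarith)
  exact ⟨j * Fintype.card V, fun x y => (G.abs_lazyProb_mul_sub_inv_card_le hdeg hreg
    (fun x y => hmin (x, y) (mem_univ _)) j x y).trans hj.le⟩

lemma statDist_eq_inv_card (hd : 0 < d) (hreg : G.IsRegularOfDegree d) (x : V) :
    statDist G x = (Fintype.card V : ℝ)⁻¹ := by
  have hedges : 2 * #G.edgeFinset = Fintype.card V * d := by
    rw [← G.sum_degrees_eq_twice_card_edges, sum_congr rfl fun v _ => hreg v, sum_const,
      card_univ, smul_eq_mul]
  have hd' : (d : ℝ) ≠ 0 := by exact_mod_cast hd.ne'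
  rw [statDist, hreg x, show (2 * #G.edgeFinset : ℝ) = Fintype.card V * d by
    exact_mod_cast hedges]
  field_simp

lemma tmix_spec (hconn : G.Connected) (hd : 0 < d) (hreg : G.IsRegularOfDegree d) (x y : V) :
    |lazyProb G (tmix G) x y / statDist G y - 1| ≤ 1 / 4 := by
  have hdeg : ∀ x, 0 < G.degree x := fun x => hreg x ▸ hd
  have hcard : (0 : ℝ) < Fintype.card V := by exact_mod_cast Fintype.card_pos
  refine Nat.sInf_mem (s := {n | ∀ x y : V, |lazyProb G n x y / statDist G y - 1| ≤ 1 / 4}) ?_ x y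
  obtain ⟨n, hn⟩ := G.exists_forall_abs_lazyProb_sub_inv_card_le hconn hdeg hreg
    (show (0 : ℝ) < 1 / (4 * Fintype.card V) by positivity)
  refine ⟨n, fun x y => ?_⟩
  have hrescale : lazyProb G n x y / statDist G y - 1 =
      (lazyProb G n x y - (Fintype.card V : ℝ)⁻¹) * Fintype.card V := by
    rw [G.statDist_eq_inv_card hd hreg]
    field_simp
  rw [hrescale, abs_mul, abs_of_pos hcard]
  calc |lazyProb G n x y - (Fintype.card V : ℝ)⁻¹| * Fintype.card V
      ≤ 1 / (4 * Fintype.card V) * Fintype.card V := by gcongr; exact hn x y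
    _ = 1 / 4 := by field_simp

lemma lazyProb_le_two_div_card (hconn : G.Connected) (hd : 0 < d)
    (hreg : G.IsRegularOfDegree d) {k : ℕ} (hk : tmix G ≤ k) (x y : V) :
    lazyProb G k x y ≤ 2 / Fintype.card V := by
  have hdeg : ∀ x, 0 < G.degree x := fun x => hreg x ▸ hd
  have hcard : (0 : ℝ) < Fintype.card V := by exact_mod_cast Fintype.card_pos
  have hmixed : ∀ z, lazyProb G (tmix G) z y ≤ 5 / 4 * (Fintype.card V : ℝ)⁻¹ := by
    intro z
    have h := (abs_le.mp (G.tmix_spec hconn hd hreg z y)).2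
    rw [G.statDist_eq_inv_card hd hreg, div_inv_eq_mul] at h
    rw [← div_eq_mul_inv, le_div_iff₀ hcard]
    linarith
  calc lazyProb G k x y = ∑ z, lazyProb G (k - tmix G) x z * lazyProb G (tmix G) z y := by
        rw [← lazyProb_add, Nat.sub_add_cancel hk]
    _ ≤ ∑ z, lazyProb G (k - tmix G) x z * (5 / 4 * (Fintype.card V : ℝ)⁻¹) :=
        sum_le_sum fun z _ => mul_le_mul_of_nonneg_left (hmixed z) (G.lazyProb_nonneg _ x z)
    _ ≤ 2 / Fintype.card V := by
        rw [← sum_mul, G.sum_lazyProb hdeg, one_mul, div_eq_mul_inv]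
        exact mul_le_mul_of_nonneg_right (by norm_num) (by positivity)

lemma pathWeight_nonneg (M : ℕ) (γ : Fin (M + 1) → V) : 0 ≤ pathWeight G M γ :=
  prod_nonneg fun _ _ => G.lazyStep_nonneg _ _

lemma pathWeight_cons (M : ℕ) (x : V) (γ : Fin (M + 1) → V) :
    pathWeight G (M + 1) (Fin.cons x γ) = lazyStep G x (γ 0) * pathWeight G M γ := by
  rw [pathWeight, prod_range_succ', extPath_cons_s5, mul_comm]
  simp [consSeq, pathWeight, extPath_zero]

lemma walkProb_true_zero (x : V) : walkProb G x 0 (fun _ => True) = 1 := by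
  rw [walkProb, ← (Equiv.funUnique (Fin 1) V).symm.sum_comp]
  simp [pathWeight, extPath_zero]

lemma walkProb_succ (M : ℕ) (x : V) (E : (ℕ → V) → Prop) :
    walkProb G x (M + 1) E = ∑ z, lazyStep G x z * walkProb G z M (fun w => E (consSeq x w)) := by
  classical
  unfold walkProb
  rw [← (Fin.consEquiv fun _ => V).sum_comp, Fintype.sum_prod_type]
  simp only [Fin.consEquiv, Equiv.coe_fn_mk, extPath_cons_s5, pathWeight_cons, consSeq]
  simp only [ite_and, mul_sum, mul_ite, mul_zero, extPath_zero]
  rw [sum_comm]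
  conv_rhs => rw [sum_comm]
  simp

lemma walkProb_markov {M n : ℕ} (hn : n ≤ M) (x : V) (E : (ℕ → V) → Prop) :
    walkProb G x M (fun w => E (fun i => w (n + i))) =
      ∑ y, lazyProb G n x y * walkProb G y (M - n) E := by
  induction n generalizing x M with
  | zero => simp [lazyProb_zero]
  | succ n ih =>
    obtain ⟨M, rfl⟩ : ∃ M', M = M' + 1 := ⟨M - 1, by omega⟩
    have hshift : ∀ w, (fun i => consSeq x w (n + 1 + i)) = fun i => w (n + i) := fun w =>
      funext fun i => by rw [Nat.add_right_comm]; rfl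
    simp only [walkProb_succ, hshift, ih (Nat.le_of_succ_le_succ hn), lazyProb_succ, mul_sum,
      sum_mul, mul_assoc, Nat.add_sub_add_right]
    exact sum_comm

lemma walkProb_true (hdeg : ∀ x, 0 < G.degree x) (M : ℕ) (x : V) :
    walkProb G x M (fun _ => True) = 1 := by
  simpa [walkProb_true_zero, G.sum_lazyProb hdeg] using G.walkProb_markov le_rfl x fun _ => True

lemma walkProb_congr {M : ℕ} {x : V} {E F : (ℕ → V) → Prop} (h : ∀ w, w 0 = x → (E w ↔ F w)) :
    walkProb G x M E = walkProb G x M F := by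
  classical
  exact sum_congr rfl fun γ _ => if_congr (and_congr_right fun h₀ => h _ h₀) rfl rfl

lemma walkProb_start_eq (hdeg : ∀ x, 0 < G.degree x) (M : ℕ) (x y : V) :
    walkProb G x M (fun w => y = w 0) = if y = x then 1 else 0 := by
  split_ifs with hyx
  · rw [← G.walkProb_true hdeg M x]
    exact G.walkProb_congr fun w hw => by simp [hw, hyx]
  · simp only [walkProb]
    refine sum_eq_zero fun γ _ => if_neg ?_
    rintro ⟨h₀, hy⟩
    exact hyx (hy.trans h₀)

lemma walkProb_eq_sum_lazyProb_mul_lazyProb (hdeg : ∀ x, 0 < G.degree x) {M n k : ℕ}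
    (h : n + k ≤ M) (x : V) :
    walkProb G x M (fun w => w n = w (n + k)) = ∑ y, lazyProb G n x y * lazyProb G k y y := by
  have hn := G.walkProb_markov (by omega : n ≤ M) x fun v => v 0 = v k
  simp only [add_zero] at hn
  rw [hn]
  refine sum_congr rfl fun y _ => congrArg _ ?_
  have hk := G.walkProb_markov (by omega : k ≤ M - n) y fun v => y = v 0
  simp only [add_zero] at hk
  rw [G.walkProb_congr fun w hw => by rw [hw], hk]
  simp [G.walkProb_start_eq hdeg]

lemma walkProb_loop_le_two_div_card (hconn : G.Connected) (hd : 0 < d)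
    (hreg : G.IsRegularOfDegree d) {M n k : ℕ} (h : n + k ≤ M) (hk : tmix G ≤ k) (x : V) :
    walkProb G x M (fun w => w n = w (n + k)) ≤ 2 / Fintype.card V := by
  have hdeg : ∀ x, 0 < G.degree x := fun x => hreg x ▸ hd
  calc walkProb G x M (fun w => w n = w (n + k))
      = ∑ y, lazyProb G n x y * lazyProb G k y y :=
        G.walkProb_eq_sum_lazyProb_mul_lazyProb hdeg h x
    _ ≤ ∑ y, lazyProb G n x y * (2 / Fintype.card V) :=
        sum_le_sum fun y _ => mul_le_mul_of_nonneg_left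
          (G.lazyProb_le_two_div_card hconn hd hreg hk y y) (G.lazyProb_nonneg n x y)
    _ = 2 / Fintype.card V := by rw [← sum_mul, G.sum_lazyProb hdeg, one_mul]

lemma walkProb_le_sum {ι : Type*} (s : Finset ι) {M : ℕ} {x : V} {E : (ℕ → V) → Prop}
    {F : ι → (ℕ → V) → Prop} (h : ∀ w, E w → ∃ i ∈ s, F i w) :
    walkProb G x M E ≤ ∑ i ∈ s, walkProb G x M (F i) := by
  classical
  unfold walkProb
  rw [sum_comm]
  refine sum_le_sum fun γ _ => ?_
  have hterm_nonneg : ∀ i ∈ s, (0 : ℝ) ≤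
      if extPath M γ 0 = x ∧ F i (extPath M γ) then pathWeight G M γ else 0 :=
    fun i _ => ite_nonneg (G.pathWeight_nonneg M γ) le_rfl
  split_ifs with hE
  · obtain ⟨i, hi, hF⟩ := h _ hE.2
    exact (if_pos ⟨hE.1, hF⟩).symm.le.trans (single_le_sum hterm_nonneg hi)
  · exact sum_nonneg hterm_nonneg

lemma walkProb_eq_one_sub_walkProb_not (hdeg : ∀ x, 0 < G.degree x) (M : ℕ) (x : V)
    (E : (ℕ → V) → Prop) : walkProb G x M E = 1 - walkProb G x M (fun w => ¬ E w) := by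
  rw [eq_sub_iff_add_eq, ← G.walkProb_true hdeg M x, walkProb, walkProb, walkProb,
    ← sum_add_distrib]
  refine sum_congr rfl fun γ _ => ?_
  by_cases hE : E (extPath M γ) <;> simp [hE]

lemma walkProb_loop_in_window_le (hconn : G.Connected) (hd : 0 < d)
    (hreg : G.IsRegularOfDegree d) {s' r N M : ℕ} (hs' : tmix G ≤ s') (hM : N + r ≤ M) (x : V) :
    walkProb G x M (fun w => ∃ n ≤ N, w n ∈ walkRange w (Icc (n + s') (n + r))) ≤
      2 * ((r - s' + 1 : ℕ) : ℝ) * ((N : ℝ) + 1) / Fintype.card V := by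
  have hunion := G.walkProb_le_sum (M := M) (x := x) (range (N + 1) ×ˢ Icc s' r)
    (E := fun w => ∃ n ≤ N, w n ∈ walkRange w (Icc (n + s') (n + r)))
    (F := fun p w => w p.1 = w (p.1 + p.2)) fun w ⟨n, hn, hmem⟩ => by
      obtain ⟨m, hm, hwm⟩ := mem_image.mp hmem
      rw [mem_Icc] at hm
      refine ⟨(n, m - n), mem_product.mpr ⟨mem_range.mpr (by omega), mem_Icc.mpr (by omega)⟩, ?_⟩
      rw [Nat.add_sub_cancel' (by omega), hwm]
  refine hunion.trans <|
    (sum_le_card_nsmul _ _ (2 / (Fintype.card V : ℝ)) fun p hp => ?_).trans ?_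
  · simp only [mem_product, mem_range, mem_Icc] at hp
    exact G.walkProb_loop_le_two_div_card hconn hd hreg (by omega) (by omega) x
  · have hcount : (N + 1) * (r + 1 - s') ≤ (r - s' + 1) * (N + 1) :=
      Nat.mul_comm (r - s' + 1) (N + 1) ▸ Nat.mul_le_mul_left _ (by omega)
    rw [card_product, card_range, Nat.card_Icc, nsmul_eq_mul]
    calc (((N + 1) * (r + 1 - s') : ℕ) : ℝ) * (2 / Fintype.card V)
        ≤ (((r - s' + 1) * (N + 1) : ℕ) : ℝ) * (2 / Fintype.card V) := by gcongr
      _ = 2 * ((r - s' + 1 : ℕ) : ℝ) * ((N : ℝ) + 1) / Fintype.card V := by push_cast; ring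

end SimpleGraph

theorem no_loops_of_intermediate_length_general
    (G : SimpleGraph V) [DecidableRel G.Adj] (hconn : G.Connected)
    (hcard : 2 ≤ Fintype.card V) (d : ℕ) (hreg : G.IsRegularOfDegree d)
    (s' r N : ℕ) (hs' : tmix G + 1 ≤ s') (ρ : V) :
    1 - 2 * ((r - s' + 1 : ℕ) : ℝ) * ((N : ℝ) + 1) / (Fintype.card V : ℝ) ≤
      walkProb G ρ (N + r) (fun w =>
        ∀ n ≤ N, w n ∉ walkRange w (Finset.Icc (n + s') (n + r))) := by
  have hdeg : ∀ x, 0 < G.degree x := by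
    have := Fintype.one_lt_card_iff_nontrivial.mp hcard
    exact fun x => hconn.preconnected.degree_pos_of_nontrivial x
  have hd : 0 < d := hreg ρ ▸ hdeg ρ
  rw [G.walkProb_eq_one_sub_walkProb_not hdeg]
  push Not
  exact sub_le_sub_left (G.walkProb_loop_in_window_le hconn hd hreg (by omega) le_rfl ρ) 1

/-- Separation of short and long loops: no loops of intermediate length. -/
theorem no_loops_of_intermediate_length
    (G : SimpleGraph V) [DecidableRel G.Adj] (hconn : G.Connected)
    (hcard : 2 ≤ Fintype.card V) (d : ℕ) (hreg : G.IsRegularOfDegree d)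
    (s' r N : ℕ) (hr : s' + 1 ≤ r) (hs' : tmix G + 1 ≤ s') (ρ : V) :
    1 - 2 * ((r - s' + 1 : ℕ) : ℝ) * ((N : ℝ) + 1) / (Fintype.card V : ℝ) ≤
      walkProb G ρ (N + r) (fun w =>
        ∀ n ≤ N, w n ∉ walkRange w (Finset.Icc (n + s') (n + r))) :=
  no_loops_of_intermediate_length_general G hconn hcard d hreg s' r N hs' ρ
end
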